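/- arXiv:1701.00476 — 13 statements merged into one kernel-verified Lean document; each statement's English description precedes it below -/
import Mathlib

section
/- Let A, B ∈ L(H) be bounded operators on a complex Hilbert space with R(A) ∩ R(B) = {0}. Then R(A+B) = R(A) ⊕ R(B) (direct sum of ranges, i.e. range additivity with trivial intersection) if and only if N(A) + N(B) = H, where N(T) denotes the kernel. -/
namespace LinearMap

variable {R M N : Type*} [Ring R] [AddCommGroup M] [AddCommGroup N] [Module R M] [Module R N]
  {f g : M →ₗ[R] N}

/-- Writing `x = u + v` with `u ∈ ker f`, `v ∈ ker g` gives `f x = f v = (f + g) v`. -/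
theorem range_le_range_add_of_sup_ker_eq_top (hk : ker f ⊔ ker g = ⊤) :
    range f ≤ range (f + g) := by
  rintro _ ⟨x, rfl⟩
  obtain ⟨u, hu, v, hv, rfl⟩ := Submodule.mem_sup.1 (hk ▸ Submodule.mem_top : x ∈ ker f ⊔ ker g)
  refine ⟨v, ?_⟩
  simp only [add_apply, mem_ker.1 hu, mem_ker.1 hv, map_add, zero_add, add_zero]

/-- If `f w = f z + g z`, then `f (w - z) = g z` lies in both ranges, so it vanishes and
`w = (w - z) + z ∈ ker f ⊔ ker g`. -/
theorem sup_ker_eq_top_of_range_le_range_add (h : Disjoint (range f) (range g))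
    (hr : range f ≤ range (f + g)) : ker f ⊔ ker g = ⊤ := by
  refine eq_top_iff.2 fun w _ => ?_
  obtain ⟨z, hz⟩ := hr (mem_range_self f w)
  have hfg : f (w - z) = g z := by
    rw [map_sub, ← hz, add_apply]
    abel
  have hgz : g z = 0 :=
    (Submodule.disjoint_def.1 h) (g z) (hfg ▸ mem_range_self f _) (mem_range_self g z)
  exact Submodule.mem_sup.2 ⟨w - z, hfg.trans hgz, z, hgz, sub_add_cancel w z⟩

theorem range_add_eq_sup_iff (h : Disjoint (range f) (range g)) :
    range (f + g) = range f ⊔ range g ↔ ker f ⊔ ker g = ⊤ := by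
  refine ⟨fun hr => sup_ker_eq_top_of_range_le_range_add h (hr ▸ le_sup_left), fun hk => ?_⟩
  refine le_antisymm (range_add_le f g) (sup_le (range_le_range_add_of_sup_ker_eq_top hk) ?_)
  rw [add_comm]
  exact range_le_range_add_of_sup_ker_eq_top (sup_comm (ker f) (ker g) ▸ hk)

end LinearMap

theorem stmt_1_general {H : Type*} [NormedAddCommGroup H] [InnerProductSpace ℂ H]
    (A B : H →L[ℂ] H)
    (h : LinearMap.range (A : H →ₗ[ℂ] H) ⊓ LinearMap.range (B : H →ₗ[ℂ] H) = ⊥) :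
    LinearMap.range ((A + B : H →L[ℂ] H) : H →ₗ[ℂ] H) = LinearMap.range (A : H →ₗ[ℂ] H) ⊔ LinearMap.range (B : H →ₗ[ℂ] H) ↔
      LinearMap.ker (A : H →ₗ[ℂ] H) ⊔ LinearMap.ker (B : H →ₗ[ℂ] H) = ⊤ := by
  rw [ContinuousLinearMap.toLinearMap_add]
  exact LinearMap.range_add_eq_sup_iff (disjoint_iff.2 h)

theorem stmt_1 {H : Type*} [NormedAddCommGroup H] [InnerProductSpace ℂ H]
    [CompleteSpace H] (A B : H →L[ℂ] H)
    (h : LinearMap.range (A : H →ₗ[ℂ] H) ⊓ LinearMap.range (B : H →ₗ[ℂ] H) = ⊥) :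
    LinearMap.range ((A + B : H →L[ℂ] H) : H →ₗ[ℂ] H) = LinearMap.range (A : H →ₗ[ℂ] H) ⊔ LinearMap.range (B : H →ₗ[ℂ] H) ↔
      LinearMap.ker (A : H →ₗ[ℂ] H) ⊔ LinearMap.ker (B : H →ₗ[ℂ] H) = ⊤ :=
  stmt_1_general A B h
end

section
/- For bounded operators A, B on a complex Hilbert space: if N(A) + N(B) = H then R(A+B) = R(A) + R(B). -/
namespace LinearMap

variable {R M N : Type*} [Semiring R] [AddCommMonoid M] [AddCommMonoid N] [Module R M]
  [Module R N]

theorem range_le_range_add_of_ker_sup_eq_top {f g : M →ₗ[R] N} (h : ker f ⊔ ker g = ⊤) :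
    range f ≤ range (f + g) := by
  rintro _ ⟨x, rfl⟩
  have hx : x ∈ ker f ⊔ ker g := h ▸ Submodule.mem_top
  obtain ⟨u, hu, v, hv, rfl⟩ := Submodule.mem_sup.mp hx
  rw [mem_ker] at hu hv
  exact ⟨v, by simp only [add_apply, map_add, hu, hv, zero_add, add_zero]⟩

theorem range_add_eq_sup_of_ker_sup_eq_top {f g : M →ₗ[R] N} (h : ker f ⊔ ker g = ⊤) :
    range (f + g) = range f ⊔ range g :=
  (range_add_le f g).antisymm <| sup_le (range_le_range_add_of_ker_sup_eq_top h) <|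
    add_comm g f ▸ range_le_range_add_of_ker_sup_eq_top (sup_comm (ker f) (ker g) ▸ h)

end LinearMap

theorem stmt_2_general {H : Type*} [NormedAddCommGroup H] [InnerProductSpace ℂ H]
    (A B : H →L[ℂ] H)
    (h : LinearMap.ker (A : H →ₗ[ℂ] H) ⊔ LinearMap.ker (B : H →ₗ[ℂ] H) = ⊤) :
    LinearMap.range ((A + B : H →L[ℂ] H) : H →ₗ[ℂ] H) = LinearMap.range (A : H →ₗ[ℂ] H) ⊔ LinearMap.range (B : H →ₗ[ℂ] H) := by
  rw [ContinuousLinearMap.toLinearMap_add]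
  exact LinearMap.range_add_eq_sup_of_ker_sup_eq_top h

theorem stmt_2 {H : Type*} [NormedAddCommGroup H] [InnerProductSpace ℂ H]
    [CompleteSpace H] (A B : H →L[ℂ] H)
    (h : LinearMap.ker (A : H →ₗ[ℂ] H) ⊔ LinearMap.ker (B : H →ₗ[ℂ] H) = ⊤) :
    LinearMap.range ((A + B : H →L[ℂ] H) : H →ₗ[ℂ] H) = LinearMap.range (A : H →ₗ[ℂ] H) ⊔ LinearMap.range (B : H →ₗ[ℂ] H) :=
  stmt_2_general A B h
end

section
/- Let A, B ∈ L(H) with A ≤⁻ B (minus order: there exist bounded idempotents P, Q with A = PB and A* = QB*). Then R(B) is closed if and only if both R(A) and R(B−A) are closed. -/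
/-!
Write `A = P B` with `P` idempotent. Taking adjoints in `A* = Q B*` gives `A = B Q*`, so `P` maps
`R(B)` onto `R(A) ⊆ R(B)`, and `1 - P` maps it onto `R(B - A)`. For a subspace `S` invariant under a
bounded idempotent `P`, `P S = S ∩ R(P)` and `(1 - P) S = S ∩ ker P` are closed when `S` is;
conversely, if both are closed then `P` and `1 - P` send `closure S` into `S`, hence so does their
sum, the identity.
-/

namespace Submodule

variable {R M : Type*} [Ring R] [AddCommGroup M] [Module R M]

theorem map_eq_inf_range_of_isIdempotentElem {p : M →ₗ[R] M} (hp : IsIdempotentElem p)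
    {S : Submodule R M} (hS : S.map p ≤ S) : S.map p = S ⊓ LinearMap.range p := by
  refine le_antisymm (le_inf hS LinearMap.map_le_range) fun y ⟨hyS, hyp⟩ => ?_
  exact ⟨y, hyS, (LinearMap.IsIdempotentElem.mem_range_iff hp).mp hyp⟩

theorem map_one_sub_le {p : M →ₗ[R] M} {S : Submodule R M} (hS : S.map p ≤ S) :
    S.map (1 - p) ≤ S := by
  rintro _ ⟨x, hx, rfl⟩
  exact S.sub_mem hx (hS ⟨x, hx, rfl⟩)

variable [TopologicalSpace M] [IsTopologicalAddGroup M] [T1Space M]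

theorem isClosed_iff_isClosed_map_and_isClosed_map_one_sub {p : M →L[R] M}
    (hp : IsIdempotentElem p) {S : Submodule R M} (hS : S.map (p : M →ₗ[R] M) ≤ S) :
    IsClosed (S : Set M) ↔
      IsClosed (S.map (p : M →ₗ[R] M) : Set M) ∧
        IsClosed (S.map (1 - (p : M →ₗ[R] M)) : Set M) := by
  have hS' : S.map (1 - (p : M →ₗ[R] M)) ≤ S := map_one_sub_le hS
  have hp' := ContinuousLinearMap.IsIdempotentElem.toLinearMap hp
  constructor
  · intro hSc
    rw [map_eq_inf_range_of_isIdempotentElem hp' hS,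
      map_eq_inf_range_of_isIdempotentElem hp'.one_sub hS']
    exact ⟨hSc.inter (ContinuousLinearMap.IsIdempotentElem.isClosed_range hp),
      hSc.inter (ContinuousLinearMap.IsIdempotentElem.isClosed_range hp.one_sub)⟩
  · rintro ⟨hP, hQ⟩
    refine isClosed_of_closure_subset fun y hy => ?_
    have hPy : p y ∈ S.map (p : M →ₗ[R] M) :=
      hP.closure_subset (map_mem_closure p.continuous hy fun x hx => ⟨x, hx, rfl⟩)
    have hQy : (1 - p) y ∈ S.map (1 - (p : M →ₗ[R] M)) :=
      hQ.closure_subset (map_mem_closure (1 - p).continuous hy fun x hx => ⟨x, hx, rfl⟩)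
    simpa using S.add_mem (hS hPy) (hS' hQy)

end Submodule

namespace ContinuousLinearMap

variable {𝕜 E F G : Type*} [RCLike 𝕜] [NormedAddCommGroup E] [InnerProductSpace 𝕜 E]
  [NormedAddCommGroup F] [InnerProductSpace 𝕜 F] [NormedAddCommGroup G] [InnerProductSpace 𝕜 G]
  [CompleteSpace E] [CompleteSpace F] [CompleteSpace G]

theorem range_le_range_of_adjoint_eq_comp {A : E →L[𝕜] F} {B : G →L[𝕜] F} {Q : G →L[𝕜] E}
    (h : adjoint A = Q ∘L adjoint B) :
    LinearMap.range (A : E →ₗ[𝕜] F) ≤ LinearMap.range (B : G →ₗ[𝕜] F) := by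
  have hA : A = B ∘L adjoint Q := by
    rw [← adjoint_adjoint A, h, adjoint_comp, adjoint_adjoint]
  rw [hA, toLinearMap_comp]
  exact LinearMap.range_comp_le_range _ _

end ContinuousLinearMap

open ContinuousLinearMap in
theorem stmt_5 {H : Type*} [NormedAddCommGroup H] [InnerProductSpace ℂ H]
    [CompleteSpace H] (A B : H →L[ℂ] H)
    (hminus : ∃ P Q : H →L[ℂ] H, P ∘L P = P ∧ Q ∘L Q = Q ∧ A = P ∘L B ∧
      adjoint A = Q ∘L adjoint B) :
    IsClosed ((LinearMap.range (B : H →ₗ[ℂ] H) : Submodule ℂ H) : Set H) ↔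
      (IsClosed ((LinearMap.range (A : H →ₗ[ℂ] H) : Submodule ℂ H) : Set H) ∧
        IsClosed ((LinearMap.range ((B - A : H →L[ℂ] H) : H →ₗ[ℂ] H) : Submodule ℂ H) : Set H)) := by
  obtain ⟨P, Q, hP, -, hA, hA'⟩ := hminus
  have hrangeA : LinearMap.range (A : H →ₗ[ℂ] H) =
      (LinearMap.range (B : H →ₗ[ℂ] H)).map (P : H →ₗ[ℂ] H) := by
    rw [hA, toLinearMap_comp, LinearMap.range_comp]
  have hrangeBA : LinearMap.range ((B - A : H →L[ℂ] H) : H →ₗ[ℂ] H) =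
      (LinearMap.range (B : H →ₗ[ℂ] H)).map (1 - (P : H →ₗ[ℂ] H)) := by
    rw [← LinearMap.range_comp, hA]
    rfl
  have hinv : (LinearMap.range (B : H →ₗ[ℂ] H)).map (P : H →ₗ[ℂ] H) ≤
      LinearMap.range (B : H →ₗ[ℂ] H) :=
    hrangeA ▸ range_le_range_of_adjoint_eq_comp hA'
  rw [hrangeA, hrangeBA]
  exact Submodule.isClosed_iff_isClosed_map_and_isClosed_map_one_sub hP hinv
end

section
/- For bounded operators A, B on a complex Hilbert space, A ≤⁻ B holds if and only if R(B) = R(A) ∔ R(B−A) (direct sum of ranges) and the closure of R(B) equals the direct sum of the closures of R(A) and R(B−A). -/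
/-!
If `A = P B` with `P` idempotent, then `P` is the identity on `R(A)` and vanishes on
`R(B - A) = R((1 - P) B)`; since `R(P)` and `ker P` are closed and complementary, this separates
the closures of the two ranges, and `x = P x + (x - P x)` splits `cl R(B)`. The second idempotent,
`A = B Q*`, puts both ranges inside `R(B)`.

Conversely, the idempotent `P` is the projection onto `cl R(A)` along a closed complement of it
containing `cl R(B - A)`: the preimage of `cl R(B - A)` under the orthogonal projection onto
`cl R(B) = cl R(A) ⊕ cl R(B - A)`. For `Q`, the algebraic direct sum `R(B) = R(A) ∔ R(B - A)`
gives `H = ker (B - A) + ker A`, and `A = B E` for the projection `E` along `ker A`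
onto the orthogonal complement of `ker B = ker (B - A) ⊓ ker A` inside `ker (B - A)`; then
`Q = E*`.
-/

open ContinuousLinearMap Submodule

section TopologicalModule

variable {R M N : Type*} [Ring R] [AddCommGroup M] [Module R M] [TopologicalSpace M]
  [AddCommGroup N] [Module R N] [TopologicalSpace N] [IsTopologicalAddGroup N]

theorem range_le_sup_range_sub (A B : M →L[R] N) : B.range ≤ A.range ⊔ (B - A).range := by
  rintro _ ⟨x, rfl⟩
  exact mem_sup.2 ⟨A x, ⟨x, rfl⟩, (B - A) x, ⟨x, rfl⟩, by simp⟩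

theorem range_eq_sup_range_sub_of_eq_comp [IsTopologicalAddGroup M]
    {A B : M →L[R] N} {S : M →L[R] M} (h : A = B ∘L S) :
    B.range = A.range ⊔ (B - A).range := by
  have hBA : B - A = B ∘L (1 - S) := by ext; simp [h]
  refine le_antisymm (range_le_sup_range_sub A B) (sup_le ?_ ?_)
  · exact h ▸ LinearMap.range_comp_le_range _ _
  · exact hBA ▸ LinearMap.range_comp_le_range _ _

theorem topologicalClosure_range_le_sup_of_eq_comp [ContinuousConstSMul R N]
    {A B : M →L[R] N} {P : N →L[R] N} (h : A = P ∘L B) :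
    B.range.topologicalClosure ≤ A.range.topologicalClosure ⊔ (B - A).range.topologicalClosure := by
  have hA : B.range.topologicalClosure ≤ A.range.topologicalClosure.comap (P : N →ₗ[R] N) := by
    refine topologicalClosure_minimal _ ?_ (isClosed_topologicalClosure _ |>.preimage P.continuous)
    rintro _ ⟨x, rfl⟩
    exact le_topologicalClosure _ ⟨x, by simp [h]⟩
  have hBA : B.range.topologicalClosure ≤
      (B - A).range.topologicalClosure.comap ((1 - P : N →L[R] N) : N →ₗ[R] N) := by
    refine topologicalClosure_minimal _ ?_
      (isClosed_topologicalClosure _ |>.preimage (1 - P).continuous)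
    rintro _ ⟨x, rfl⟩
    exact le_topologicalClosure _ ⟨x, by simp [h]⟩
  intro x hx
  exact mem_sup.2 ⟨P x, hA hx, (1 - P) x, hBA hx, by simp⟩

theorem disjoint_topologicalClosure_range_of_eq_comp [ContinuousConstSMul R N] [T1Space N]
    {A B : M →L[R] N} {P : N →L[R] N} (hP : IsIdempotentElem P) (h : A = P ∘L B) :
    Disjoint A.range.topologicalClosure (B - A).range.topologicalClosure := by
  have hA : A.range ≤ P.range := h ▸ LinearMap.range_comp_le_range _ _
  have hBA : (B - A).range ≤ P.ker := by
    rintro _ ⟨x, rfl⟩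
    simpa [h, sub_eq_zero] using congr($hP (B x)).symm
  exact (LinearMap.IsIdempotentElem.isCompl hP.toLinearMap).disjoint.mono
    (topologicalClosure_minimal _ hA hP.isClosed_range)
    (topologicalClosure_minimal _ hBA (isClosed_ker P))

theorem codisjoint_ker_sub_ker {A B : M →L[R] N} (hAB : A.range ≤ B.range)
    (hdisj : Disjoint A.range (B - A).range) : Codisjoint (B - A).ker A.ker := by
  refine codisjoint_iff_le_sup.2 fun x _ ↦ ?_
  obtain ⟨y, hy⟩ := hAB ⟨x, rfl⟩
  have hxy : A (x - y) = (B - A) y := by simp [← show B y = A x from hy]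
  have hzero : A (x - y) = 0 :=
    disjoint_def.1 hdisj _ ⟨x - y, rfl⟩ (hxy ▸ ⟨y, rfl⟩)
  exact mem_sup.2 ⟨y, show (B - A) y = 0 from hxy ▸ hzero, x - y, hzero, by abel⟩

theorem eq_comp_projectionL_of_le_ker_sub [ContinuousSub M] {A B : M →L[R] N} {K : Submodule R M}
    (h : IsTopCompl K A.ker) (hK : K ≤ (B - A).ker) : A = B ∘L K.projectionL A.ker h := by
  ext x
  have hx := projectionL_add_projectionL_eq_self h x
  have hE : (B - A) (K.projectionL A.ker h x) = 0 := hK (projectionL_apply_mem h x)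
  have hE' : A (A.ker.projectionL K h.symm x) = 0 := projectionL_apply_mem h.symm x
  rw [sub_apply, sub_eq_zero] at hE
  conv_lhs => rw [← hx]
  rw [map_add, hE', add_zero, comp_apply, hE]

theorem eq_projectionL_comp_of_range_le {A B : M →L[R] N} {U V : Submodule R N}
    (h : IsTopCompl U V) (hA : A.range ≤ U) (hBA : (B - A).range ≤ V) :
    A = U.projectionL V h ∘L B := by
  ext x
  have hB : B x = A x + (B - A) x := by simp
  have hAx : A x ∈ U := hA ⟨x, rfl⟩
  have hBAx : (B - A) x ∈ V := hBA ⟨x, rfl⟩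
  rw [comp_apply, hB, map_add, (projectionL_eq_self_iff h _).2 hAx,
    (projectionL_apply_eq_zero_iff h).2 hBAx, add_zero]

end TopologicalModule

section Hilbert

variable {𝕜 H : Type*} [RCLike 𝕜] [NormedAddCommGroup H] [InnerProductSpace 𝕜 H]
  [CompleteSpace H]

theorem isCompl_inf_orthogonal_inf {K L : Submodule 𝕜 H} (hK : IsClosed (K : Set H))
    (hL : IsClosed (L : Set H)) (h : Codisjoint K L) : IsCompl (K ⊓ (K ⊓ L)ᗮ) L := by
  have : CompleteSpace (K ⊓ L : Submodule 𝕜 H) := (hK.inter hL).completeSpace_coe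
  constructor
  · rw [disjoint_def]
    rintro x ⟨hxK, hx⟩ hxL
    exact disjoint_def.1 (orthogonal_disjoint (K ⊓ L)) x ⟨hxK, hxL⟩ hx
  · refine codisjoint_iff_le_sup.2 fun x _ ↦ ?_
    obtain ⟨k, hk, l, hl, rfl⟩ := mem_sup.1 (h.eq_top ▸ mem_top : x ∈ K ⊔ L)
    have hp : (K ⊓ L).starProjection k ∈ K ⊓ L := starProjection_apply_mem _ k
    exact mem_sup.2 ⟨k - (K ⊓ L).starProjection k,
      ⟨sub_mem hk hp.1, sub_starProjection_mem_orthogonal k⟩,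
      (K ⊓ L).starProjection k + l, add_mem hp.2 hl, by abel⟩

theorem exists_isTopCompl_le_of_isClosed_sup {U V : Submodule 𝕜 H} (hU : IsClosed (U : Set H))
    (hV : IsClosed (V : Set H)) (hUV : IsClosed ((U ⊔ V : Submodule 𝕜 H) : Set H))
    (hdisj : Disjoint U V) : ∃ V', V ≤ V' ∧ IsTopCompl U V' := by
  have : CompleteSpace (U ⊔ V : Submodule 𝕜 H) := hUV.completeSpace_coe
  set π := (U ⊔ V).starProjection
  have hπ : ∀ x ∈ U ⊔ V, π x = x := fun x hx ↦ starProjection_eq_self_iff.2 hx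
  refine ⟨V.comap (π : H →ₗ[𝕜] H), fun v hv ↦ ?_,
    IsCompl.isTopCompl_of_isClosed ⟨?_, ?_⟩ hU (hV.preimage π.continuous)⟩
  · show π v ∈ V
    rwa [hπ v (mem_sup_right hv)]
  · refine disjoint_def.2 fun x hxU hxV ↦ disjoint_def.1 hdisj x hxU ?_
    rwa [mem_comap, coe_coe, hπ x (mem_sup_left hxU)] at hxV
  · refine codisjoint_iff_le_sup.2 fun x _ ↦ ?_
    obtain ⟨u, hu, v, hv, huv⟩ := mem_sup.1 (starProjection_apply_mem (U ⊔ V) x)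
    refine mem_sup.2 ⟨u, hu, x - u, ?_, by abel⟩
    show π (x - u) ∈ V
    rwa [map_sub, hπ u (mem_sup_left hu), ← huv, add_sub_cancel_left]

end Hilbert

open ContinuousLinearMap in
theorem stmt_6 {H : Type*} [NormedAddCommGroup H] [InnerProductSpace ℂ H]
    [CompleteSpace H] (A B : H →L[ℂ] H) :
    (∃ P Q : H →L[ℂ] H, P ∘L P = P ∧ Q ∘L Q = Q ∧ A = P ∘L B ∧
        adjoint A = Q ∘L adjoint B) ↔
      (LinearMap.range (B : H →ₗ[ℂ] H) = LinearMap.range (A : H →ₗ[ℂ] H) ⊔ LinearMap.range ((B - A : H →L[ℂ] H) : H →ₗ[ℂ] H) ∧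
        LinearMap.range (A : H →ₗ[ℂ] H) ⊓ LinearMap.range ((B - A : H →L[ℂ] H) : H →ₗ[ℂ] H) = ⊥ ∧
        (LinearMap.range (B : H →ₗ[ℂ] H)).topologicalClosure =
          (LinearMap.range (A : H →ₗ[ℂ] H)).topologicalClosure ⊔
            (LinearMap.range ((B - A : H →L[ℂ] H) : H →ₗ[ℂ] H)).topologicalClosure ∧
        (LinearMap.range (A : H →ₗ[ℂ] H)).topologicalClosure ⊓
          (LinearMap.range ((B - A : H →L[ℂ] H) : H →ₗ[ℂ] H)).topologicalClosure = ⊥) := by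
  constructor
  · rintro ⟨P, Q, hP, -, hPA, hQA⟩
    have hAQ : A = B ∘L adjoint Q := by simpa [adjoint_comp] using congr(adjoint $hQA)
    have hR := range_eq_sup_range_sub_of_eq_comp hAQ
    have hcl := disjoint_topologicalClosure_range_of_eq_comp hP hPA
    refine ⟨hR, disjoint_iff.1 (hcl.mono (le_topologicalClosure _) (le_topologicalClosure _)),
      le_antisymm (topologicalClosure_range_le_sup_of_eq_comp hPA) ?_, disjoint_iff.1 hcl⟩
    exact sup_le (topologicalClosure_mono (hR ▸ le_sup_left))
      (topologicalClosure_mono (hR ▸ le_sup_right))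
  · rintro ⟨hR, hdisj, hcl, hcldisj⟩
    obtain ⟨V, hV, hUV⟩ := exists_isTopCompl_le_of_isClosed_sup
      (isClosed_topologicalClosure _) (isClosed_topologicalClosure _)
      (hcl ▸ isClosed_topologicalClosure _) (disjoint_iff.2 hcldisj)
    have hPA := eq_projectionL_comp_of_range_le hUV (le_topologicalClosure _)
      ((le_topologicalClosure _).trans hV)
    have hKL := isCompl_inf_orthogonal_inf (isClosed_ker (B - A)) (isClosed_ker A)
      (codisjoint_ker_sub_ker (hR ▸ le_sup_left) (disjoint_iff.2 hdisj))
    have hE := IsCompl.isTopCompl_of_isClosed hKL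
      ((isClosed_ker _).inter (isClosed_orthogonal _)) (isClosed_ker A)
    obtain ⟨E, hEE, hAE⟩ : ∃ E : H →L[ℂ] H, IsIdempotentElem E ∧ A = B ∘L E :=
      ⟨_, isIdempotentElem_projectionL hE, eq_comp_projectionL_of_le_ker_sub hE inf_le_left⟩
    refine ⟨_, adjoint E, isIdempotentElem_projectionL hUV, ?_, hPA, by rw [hAE, adjoint_comp]⟩
    rw [← adjoint_comp]
    exact congr(adjoint $hEE)
end

section
/- For bounded operators A, B on a complex Hilbert space, define A *≤ B (left star order) to mean A*A = A*B and R(A) ⊆ R(B). Then A *≤ B implies A ≤⁻ B (minus order). -/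
/-!
Orthogonal projection `P` onto the closure of `R(A)` gives `PB = A`: the hypothesis
`A*(B - A) = 0` says that `R(B - A)` is orthogonal to `R(A)`.

For `Q`, Douglas' lemma factors `A = BC` with `C` taking values in `(ker B)ᗮ`, which forces
`ker A ⊆ ker C`. Since `A*A(C - 1) = A*BC - A*A = 0` and `ker (A*A) = ker A`, also `AC = A`,
so `A(C² - C) = 0` and hence `C² = C`. Then `Q = C*` works.
-/

namespace ContinuousLinearMap

section Idempotent

variable {R M N : Type*} [Ring R] [TopologicalSpace M] [AddCommGroup M] [Module R M]
  [TopologicalSpace N] [AddCommGroup N] [Module R N]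

theorem isIdempotentElem_of_comp_eq_self_of_ker_le {A : M →L[R] N} {C : M →L[R] M}
    (hAC : A ∘L C = A) (hker : A.ker ≤ C.ker) : IsIdempotentElem C := by
  ext x
  have hA : A (C x - x) = 0 := by rw [map_sub, ← comp_apply, hAC, sub_self]
  have hC := hker hA
  rwa [LinearMap.mem_ker, coe_coe, map_sub, sub_eq_zero] at hC

end Idempotent

section Douglas

variable {𝕜 E F G : Type*} [RCLike 𝕜] [NormedAddCommGroup F] [InnerProductSpace 𝕜 F]
  [NormedAddCommGroup G] [NormedSpace 𝕜 G]

theorem injOn_orthogonal_ker (B : F →L[𝕜] G) : Set.InjOn B B.kerᗮ := by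
  intro u hu v hv huv
  have huv' : u - v ∈ B.ker ⊓ B.kerᗮ := Submodule.mem_inf.mpr
    ⟨by rw [LinearMap.mem_ker, coe_coe, map_sub, huv, sub_self], sub_mem hu hv⟩
  rwa [Submodule.inf_orthogonal_eq_bot, Submodule.mem_bot, sub_eq_zero] at huv'

variable [CompleteSpace F]

theorem apply_starProjection_orthogonal_ker (B : F →L[𝕜] G) (y : F) :
    B (B.kerᗮ.starProjection y) = B y := by
  have hy : B (B.ker.starProjection y) = 0 := B.ker.starProjection_apply_mem y
  rw [Submodule.starProjection_orthogonal, sub_apply, map_sub, hy, sub_zero, id_apply]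

variable [NormedAddCommGroup E] [NormedSpace 𝕜 E] [CompleteSpace E]

theorem exists_comp_eq_and_ker_le_of_range_le {A : E →L[𝕜] G} {B : F →L[𝕜] G}
    (h : A.range ≤ B.range) : ∃ C : E →L[𝕜] F, B ∘L C = A ∧ A.ker ≤ C.ker := by
  obtain ⟨c, hc⟩ := Module.projective_lifting_property (B : F →ₗ[𝕜] G).rangeRestrict
    ((A : E →ₗ[𝕜] G).codRestrict _ fun x => h ⟨x, rfl⟩) (LinearMap.surjective_rangeRestrict _)
  set d : E →ₗ[𝕜] F := (B.kerᗮ.starProjection : F →ₗ[𝕜] F) ∘ₗ c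
  have hBd (x : E) : B (d x) = A x :=
    (apply_starProjection_orthogonal_ker B _).trans congr(($hc x : G))
  have hd_mem (x : E) : d x ∈ B.kerᗮ := B.kerᗮ.starProjection_apply_mem _
  have hd_unique {x y} (hy : y ∈ B.kerᗮ) (hBy : B y = A x) : y = d x :=
    injOn_orthogonal_ker B hy (hd_mem x) (hBy.trans (hBd x).symm)
  refine ⟨.ofSeqClosedGraph (g := d) fun u x y hu hdu => hd_unique ?_ ?_, ?_, ?_⟩
  · exact B.ker.isClosed_orthogonal.mem_of_tendsto hdu (.of_forall fun n => hd_mem (u n))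
  · refine tendsto_nhds_unique ((B.continuous.tendsto y).comp hdu) ?_
    simpa only [Function.comp_def, hBd] using (A.continuous.tendsto x).comp hu
  · ext x
    exact hBd x
  · intro x hx
    exact (hd_unique (zero_mem _) (by rw [map_zero]; exact hx.symm)).symm

end Douglas

section StarOrder

variable {𝕜 E F : Type*} [RCLike 𝕜]
  [NormedAddCommGroup E] [InnerProductSpace 𝕜 E] [CompleteSpace E]
  [NormedAddCommGroup F] [InnerProductSpace 𝕜 F] [CompleteSpace F]

theorem exists_isIdempotentElem_comp_eq_of_adjoint_comp_eq {A B : E →L[𝕜] F}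
    (h : adjoint A ∘L A = adjoint A ∘L B) :
    ∃ P : F →L[𝕜] F, IsIdempotentElem P ∧ P ∘L B = A := by
  set K := A.rangeᗮ with hK
  refine ⟨Kᗮ.starProjection, Kᗮ.isIdempotentElem_starProjection, ?_⟩
  ext x
  have hA : A x ∈ Kᗮ := A.range.le_orthogonal_orthogonal ⟨x, rfl⟩
  have hBA : (B - A) x ∈ K := by
    rw [hK, orthogonal_range, LinearMap.mem_ker, coe_coe, sub_apply, map_sub]
    exact sub_eq_zero.mpr congr($h.symm x)
  calc Kᗮ.starProjection (B x) = Kᗮ.starProjection (A x) + Kᗮ.starProjection ((B - A) x) := by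
        rw [← map_add, sub_apply, add_sub_cancel]
    _ = A x := by
        rw [Submodule.starProjection_eq_self_iff.mpr hA,
          Submodule.starProjection_orthogonal_apply_eq_zero hBA, add_zero]

theorem comp_eq_self_of_adjoint_comp_eq {A B : E →L[𝕜] F} {C : E →L[𝕜] E}
    (h : adjoint A ∘L A = adjoint A ∘L B) (hBC : B ∘L C = A) : A ∘L C = A := by
  ext x
  have hACx : (adjoint A ∘L A) (C x) = (adjoint A ∘L A) x :=
    congr($h (C x)).trans congr(adjoint A ($hBC x))
  have hx : C x - x ∈ (adjoint A ∘L A).ker := by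
    rw [LinearMap.mem_ker, coe_coe, map_sub, hACx, sub_self]
  rwa [ker_adjoint_comp_self, LinearMap.mem_ker, coe_coe, map_sub, sub_eq_zero] at hx

end StarOrder

end ContinuousLinearMap

open ContinuousLinearMap in
theorem stmt_7 {H : Type*} [NormedAddCommGroup H] [InnerProductSpace ℂ H]
    [CompleteSpace H] (A B : H →L[ℂ] H)
    (h1 : adjoint A ∘L A = adjoint A ∘L B)
    (h2 : LinearMap.range (A : H →ₗ[ℂ] H) ≤ LinearMap.range (B : H →ₗ[ℂ] H)) :
    ∃ P Q : H →L[ℂ] H, P ∘L P = P ∧ Q ∘L Q = Q ∧ A = P ∘L B ∧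
      adjoint A = Q ∘L adjoint B := by
  obtain ⟨P, hP, hPB⟩ := exists_isIdempotentElem_comp_eq_of_adjoint_comp_eq h1
  obtain ⟨C, hBC, hker⟩ := exists_comp_eq_and_ker_le_of_range_le h2
  have hC : IsIdempotentElem C :=
    isIdempotentElem_of_comp_eq_self_of_ker_le (comp_eq_self_of_adjoint_comp_eq h1 hBC) hker
  refine ⟨P, adjoint C, hP.eq, hC.star.eq, hPB.symm, ?_⟩
  rw [← adjoint_comp, hBC]
end

section
/- For bounded operators A, B on a complex Hilbert space, A *≤ B (i.e. A*A = A*B and R(A) ⊆ R(B)) holds if and only if R(B) = R(A) ⊕ R(B−A) where the sum is direct and orthogonal (every element of R(A) is orthogonal to every element of R(B−A)). -/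
namespace ContinuousLinearMap

section Range

variable {R M N : Type*} [Ring R] [AddCommGroup M] [Module R M] [TopologicalSpace M]
  [AddCommGroup N] [Module R N] [TopologicalSpace N] [IsTopologicalAddGroup N]

theorem range_le_range_sup_range_sub (A B : M →L[R] N) :
    LinearMap.range (B : M →ₗ[R] N) ≤
      LinearMap.range (A : M →ₗ[R] N) ⊔ LinearMap.range ((B - A : M →L[R] N) : M →ₗ[R] N) := by
  simpa using LinearMap.range_add_le (A : M →ₗ[R] N) ((B - A : M →L[R] N) : M →ₗ[R] N)

theorem range_sub_le_of_range_le {A B : M →L[R] N}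
    (h : LinearMap.range (A : M →ₗ[R] N) ≤ LinearMap.range (B : M →ₗ[R] N)) :
    LinearMap.range ((B - A : M →L[R] N) : M →ₗ[R] N) ≤ LinearMap.range (B : M →ₗ[R] N) := by
  rintro _ ⟨x, rfl⟩
  exact sub_mem ⟨x, rfl⟩ (h ⟨x, rfl⟩)

end Range

variable {𝕜 E F : Type*} [RCLike 𝕜] [NormedAddCommGroup E] [InnerProductSpace 𝕜 E]
  [NormedAddCommGroup F] [InnerProductSpace 𝕜 F]

/-- `A† A = A† B` says `A† (B - A) = 0`, i.e. `range (B - A) ⊆ ker A† = (range A)ᗮ`. -/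
theorem adjoint_comp_eq_iff_isOrtho_range_sub [CompleteSpace E] [CompleteSpace F]
    (A B : E →L[𝕜] F) :
    adjoint A ∘L A = adjoint A ∘L B ↔
      LinearMap.range (A : E →ₗ[𝕜] F) ⟂ LinearMap.range ((B - A : E →L[𝕜] F) : E →ₗ[𝕜] F) := by
  rw [eq_comm, ← sub_eq_zero, ← comp_sub, Submodule.isOrtho_comm, Submodule.isOrtho_iff_le,
    orthogonal_range, ← coe_inj, toLinearMap_comp, toLinearMap_zero, ← LinearMap.range_le_ker_iff]

end ContinuousLinearMap

open ContinuousLinearMap in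
theorem stmt_8 {H : Type*} [NormedAddCommGroup H] [InnerProductSpace ℂ H]
    [CompleteSpace H] (A B : H →L[ℂ] H) :
    (adjoint A ∘L A = adjoint A ∘L B ∧ LinearMap.range (A : H →ₗ[ℂ] H) ≤ LinearMap.range (B : H →ₗ[ℂ] H)) ↔
      (LinearMap.range (B : H →ₗ[ℂ] H) = LinearMap.range (A : H →ₗ[ℂ] H) ⊔ LinearMap.range ((B - A : H →L[ℂ] H) : H →ₗ[ℂ] H) ∧
        LinearMap.range (A : H →ₗ[ℂ] H) ⊓ LinearMap.range ((B - A : H →L[ℂ] H) : H →ₗ[ℂ] H) = ⊥ ∧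
        ∀ x ∈ LinearMap.range (A : H →ₗ[ℂ] H), ∀ y ∈ LinearMap.range ((B - A : H →L[ℂ] H) : H →ₗ[ℂ] H),
          (inner ℂ x y : ℂ) = 0) := by
  rw [adjoint_comp_eq_iff_isOrtho_range_sub, ← Submodule.isOrtho_iff_inner_eq]
  constructor
  · rintro ⟨hortho, hle⟩
    exact ⟨(range_le_range_sup_range_sub A B).antisymm (sup_le hle (range_sub_le_of_range_le hle)),
      hortho.disjoint.eq_bot, hortho⟩
  · rintro ⟨hsup, -, hortho⟩
    exact ⟨hortho, hsup ▸ le_sup_left⟩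
end

section
/- The relation A ≤⁻_l B defined by R(B) = R(A) ∔ R(B−A) (range of B is the direct sum of the ranges of A and B−A) is a partial order on L(H): it is reflexive, antisymmetric, and transitive. -/
/-- The left minus order: `R(B) = R(A) ∔ R(B-A)` (direct sum). -/
def leftMinus {H : Type*} [NormedAddCommGroup H] [InnerProductSpace ℂ H]
    [CompleteSpace H] (A B : H →L[ℂ] H) : Prop :=
  LinearMap.range (B : H →ₗ[ℂ] H) = LinearMap.range (A : H →ₗ[ℂ] H) ⊔
      LinearMap.range ((B - A : H →L[ℂ] H) : H →ₗ[ℂ] H) ∧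
    LinearMap.range (A : H →ₗ[ℂ] H) ⊓ LinearMap.range ((B - A : H →L[ℂ] H) : H →ₗ[ℂ] H) = ⊥

/-!
Since `g x = f x + (g - f) x`, the range of `g` always lies in `R(f) ⊔ R(g - f)`, so the first
half of the definition just says `R(f) ≤ R(g)` and the order is
`R(f) ≤ R(g) ∧ Disjoint R(f) R(g - f)`, a condition on linear maps between arbitrary modules.
Antisymmetry: `R(g - f) = R(f - g)` then lies in `R(f)`, which it meets trivially, so `g = f`.
Transitivity: if `f x = (h - f) y`, then `(h - g) y = f x - (g - f) y` lies in `R(g)`, hence vanishes;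
so `f x = (g - f) y`, which vanishes as well.
-/

namespace LinearMap

variable {R M N : Type*} [Ring R] [AddCommGroup M] [AddCommGroup N] [Module R M] [Module R N]

def LeftMinusLE (f g : M →ₗ[R] N) : Prop :=
  range f ≤ range g ∧ Disjoint (range f) (range (g - f))

theorem range_sub_comm (f g : M →ₗ[R] N) : range (f - g) = range (g - f) := by
  rw [← range_neg, neg_sub]

theorem range_le_sup_range_sub (f g : M →ₗ[R] N) : range g ≤ range f ⊔ range (g - f) := by
  rintro _ ⟨x, rfl⟩
  rw [← add_sub_cancel (f x) (g x)]
  exact Submodule.add_mem_sup (mem_range_self f x) (mem_range_self (g - f) x)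

theorem range_sub_le {f g : M →ₗ[R] N} (h : range f ≤ range g) : range (g - f) ≤ range g := by
  rintro _ ⟨x, rfl⟩
  exact Submodule.sub_mem _ (mem_range_self g x) (h (mem_range_self f x))

theorem range_eq_sup_range_sub_iff (f g : M →ₗ[R] N) :
    range g = range f ⊔ range (g - f) ↔ range f ≤ range g :=
  ⟨fun h => h ▸ le_sup_left,
    fun h => (range_le_sup_range_sub f g).antisymm (sup_le h (range_sub_le h))⟩

theorem leftMinusLE_refl (f : M →ₗ[R] N) : LeftMinusLE f f := by
  simp [LeftMinusLE]

theorem leftMinusLE_antisymm {f g : M →ₗ[R] N} (hfg : LeftMinusLE f g) (hgf : LeftMinusLE g f) :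
    f = g := by
  have hle : range (g - f) ≤ range f := range_sub_comm f g ▸ range_sub_le hgf.1
  have hzero : range (g - f) = ⊥ := disjoint_self.mp (hfg.2.mono_left hle)
  exact (sub_eq_zero.mp (range_eq_bot.mp hzero)).symm

theorem leftMinusLE_trans {f g h : M →ₗ[R] N} (hfg : LeftMinusLE f g) (hgh : LeftMinusLE g h) :
    LeftMinusLE f h := by
  refine ⟨hfg.1.trans hgh.1, Submodule.disjoint_def.mpr ?_⟩
  rintro _ ⟨x, rfl⟩ ⟨y, hy⟩
  have hsplit : (h - g) y = f x - (g - f) y := by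
    rw [← hy]; simp only [sub_apply]; abel
  have hmem_g : (h - g) y ∈ range g := hsplit ▸
    Submodule.sub_mem _ (hfg.1 (mem_range_self f x)) (range_sub_le hfg.1 (mem_range_self (g - f) y))
  have hhg : (h - g) y = 0 :=
    Submodule.disjoint_def.mp hgh.2 _ hmem_g (mem_range_self (h - g) y)
  have hfx : f x = (g - f) y := sub_eq_zero.mp (hsplit ▸ hhg)
  exact Submodule.disjoint_def.mp hfg.2 _ (mem_range_self f x) (hfx ▸ mem_range_self (g - f) y)

end LinearMap

theorem leftMinus_iff {H : Type*} [NormedAddCommGroup H] [InnerProductSpace ℂ H]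
    [CompleteSpace H] (A B : H →L[ℂ] H) :
    leftMinus A B ↔ LinearMap.LeftMinusLE (A : H →ₗ[ℂ] H) (B : H →ₗ[ℂ] H) := by
  rw [leftMinus, LinearMap.LeftMinusLE, ContinuousLinearMap.toLinearMap_sub,
    LinearMap.range_eq_sup_range_sub_iff, disjoint_iff]

theorem stmt_10 {H : Type*} [NormedAddCommGroup H] [InnerProductSpace ℂ H]
    [CompleteSpace H] :
    (∀ A : H →L[ℂ] H, leftMinus A A) ∧
    (∀ A B : H →L[ℂ] H, leftMinus A B → leftMinus B A → A = B) ∧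
    (∀ A B C : H →L[ℂ] H, leftMinus A B → leftMinus B C → leftMinus A C) := by
  simp only [leftMinus_iff]
  refine ⟨fun A => LinearMap.leftMinusLE_refl _, fun A B hAB hBA => ?_,
    fun A B C hAB hBC => LinearMap.leftMinusLE_trans hAB hBC⟩
  exact ContinuousLinearMap.coe_injective (LinearMap.leftMinusLE_antisymm hAB hBA)
end

section
/- The star order: for A, B ∈ L(H), the conditions A*A = A*B and AA* = BA* hold if and only if R(B) = R(A) ⊕ R(B−A) and R(B*) = R(A*) ⊕ R(B*−A*), where both sums are orthogonal direct sums. -/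
/-! Write `B = A + C`. The two identities say `A* C = 0` and `C A* = 0`, i.e. `A C* = 0`, which are
exactly the orthogonality of `R(A), R(C)` and of `R(A*), R(C*)`. The range identities come for free:
`A C* = 0` puts `(ker C)ᗮ = closure R(C*)` inside `ker A`, so each `x` splits as `k + a` with
`C k = 0`, `A a = 0`, and then `(A + C) k = A x`; symmetrically `R(C) ≤ R(A + C)`. -/

namespace ContinuousLinearMap

variable {𝕜 E F G : Type*} [RCLike 𝕜]
  [NormedAddCommGroup E] [InnerProductSpace 𝕜 E] [CompleteSpace E]
  [NormedAddCommGroup F] [InnerProductSpace 𝕜 F] [CompleteSpace F]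
  [NormedAddCommGroup G] [InnerProductSpace 𝕜 G]

theorem isOrtho_range_iff_adjoint_comp_eq_zero (S : E →L[𝕜] F) (T : G →L[𝕜] F) :
    S.range ⟂ T.range ↔ adjoint S ∘L T = 0 := by
  rw [Submodule.isOrtho_iff_inner_eq]
  constructor
  · intro h
    ext v
    refine ext_inner_left 𝕜 fun u => ?_
    simpa [adjoint_inner_right] using h _ ⟨u, rfl⟩ _ ⟨v, rfl⟩
  · rintro h _ ⟨u, rfl⟩ _ ⟨v, rfl⟩
    simp [← adjoint_inner_right, ← comp_apply, h]

theorem comp_adjoint_eq_zero_comm {A C : E →L[𝕜] F} :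
    A ∘L adjoint C = 0 ↔ C ∘L adjoint A = 0 := by
  rw [← adjoint_adjoint (C ∘L adjoint A), adjoint_comp, adjoint_adjoint, LinearIsometryEquiv.map_eq_zero_iff]

theorem range_le_range_add_of_comp_adjoint_eq_zero {A C : E →L[𝕜] F} (h : A ∘L adjoint C = 0) :
    A.range ≤ (A + C).range := by
  have : CompleteSpace C.ker := (isClosed_ker C).completeSpace_coe
  have hker : C.kerᗮ ≤ A.ker := by
    rw [orthogonal_ker]
    refine Submodule.topologicalClosure_minimal _ ?_ (isClosed_ker A)
    rintro _ ⟨v, rfl⟩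
    exact congr($h v)
  rintro _ ⟨x, rfl⟩
  have hx : x ∈ C.ker ⊔ C.kerᗮ := by
    simp [Submodule.sup_orthogonal_of_hasOrthogonalProjection]
  obtain ⟨k, hk, a, ha, rfl⟩ := Submodule.mem_sup.1 hx
  have hCk : C k = 0 := hk
  have hAa : A a = 0 := hker ha
  exact ⟨k, by simp [hCk, hAa]⟩

theorem range_add_eq_sup_of_comp_adjoint_eq_zero {A C : E →L[𝕜] F} (h : A ∘L adjoint C = 0) :
    (A + C).range = A.range ⊔ C.range := by
  refine le_antisymm (LinearMap.range_add_le _ _) (sup_le ?_ ?_)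
  · exact range_le_range_add_of_comp_adjoint_eq_zero h
  · rw [add_comm]
    exact range_le_range_add_of_comp_adjoint_eq_zero (comp_adjoint_eq_zero_comm.1 h)

end ContinuousLinearMap

open ContinuousLinearMap in
theorem stmt_12 {H : Type*} [NormedAddCommGroup H] [InnerProductSpace ℂ H]
    [CompleteSpace H] (A B : H →L[ℂ] H) :
    (adjoint A ∘L A = adjoint A ∘L B ∧ A ∘L adjoint A = B ∘L adjoint A) ↔
      (LinearMap.range (B : H →ₗ[ℂ] H) = LinearMap.range (A : H →ₗ[ℂ] H) ⊔ LinearMap.range ((B - A : H →L[ℂ] H) : H →ₗ[ℂ] H) ∧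
        (∀ x ∈ LinearMap.range (A : H →ₗ[ℂ] H), ∀ y ∈ LinearMap.range ((B - A : H →L[ℂ] H) : H →ₗ[ℂ] H),
          (inner ℂ x y : ℂ) = 0) ∧
        LinearMap.range ((adjoint B : H →L[ℂ] H) : H →ₗ[ℂ] H) =
          LinearMap.range ((adjoint A : H →L[ℂ] H) : H →ₗ[ℂ] H) ⊔
            LinearMap.range ((adjoint B - adjoint A : H →L[ℂ] H) : H →ₗ[ℂ] H) ∧
        (∀ x ∈ LinearMap.range ((adjoint A : H →L[ℂ] H) : H →ₗ[ℂ] H),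
          ∀ y ∈ LinearMap.range ((adjoint B - adjoint A : H →L[ℂ] H) : H →ₗ[ℂ] H), (inner ℂ x y : ℂ) = 0)) := by
  obtain ⟨C, rfl⟩ : ∃ C, B = A + C := ⟨B - A, (add_sub_cancel A B).symm⟩
  simp only [map_add, add_sub_cancel_left, comp_add, add_comp, left_eq_add,
    ← Submodule.isOrtho_iff_inner_eq, isOrtho_range_iff_adjoint_comp_eq_zero, adjoint_adjoint]
  rw [← comp_adjoint_eq_zero_comm]
  constructor
  · rintro ⟨hAC, hCA⟩
    exact ⟨range_add_eq_sup_of_comp_adjoint_eq_zero hCA, hAC,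
      range_add_eq_sup_of_comp_adjoint_eq_zero (by rwa [adjoint_adjoint]), hCA⟩
  · rintro ⟨-, hAC, -, hCA⟩
    exact ⟨hAC, hCA⟩
end

section
/- If A, B ∈ L(H) satisfy the left minus order A ≤⁻_l B (i.e. R(B) = R(A) ∔ R(B−A)), then the closure of R(B*) equals the direct sum of the closures of R(A*) and R(B*−A*). -/
/-!
Write `N₁ = ker A` and `N₂ = ker (B - A)`. The left minus order says exactly that `B = A + (B - A)`
splits the range of `B` directly, which forces `ker B = N₁ ⊓ N₂` and `N₁ ⊔ N₂ = H`. Since the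
closure of `R(T*)` is `(ker T)ᗮ`, the claim becomes `(N₁ ⊓ N₂)ᗮ = N₁ᗮ ⊔ N₂ᗮ` and
`N₁ᗮ ⊓ N₂ᗮ = 0`. The second is `(N₁ ⊔ N₂)ᗮ = 0`. For the first, the algebraic sum `N₁ᗮ ⊔ N₂ᗮ` is
a priori not closed; it is produced by the adjoint `P*` of the bounded projection `P` onto the
closed complement `(N₁ ⊓ N₂)ᗮ ⊓ N₁` of `N₂`, via `z = (z - P* z) + P* z`.
-/

open ContinuousLinearMap Submodule

namespace LinearMap

variable {R M N : Type*} [Ring R] [AddCommGroup M] [AddCommGroup N] [Module R M] [Module R N]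
  {f g : M →ₗ[R] N}

theorem ker_add_of_disjoint_range (h : Disjoint (range f) (range g)) :
    ker (f + g) = ker f ⊓ ker g := by
  refine le_antisymm (fun x hx => ?_) (fun x ⟨hf, hg⟩ => by simp_all)
  have hfg : f x = g (-x) := by
    rw [mem_ker, add_apply] at hx
    rw [map_neg, eq_neg_iff_add_eq_zero, hx]
  have hfx : f x = 0 := (disjoint_def.mp h) _ (mem_range_self f x) (hfg ▸ mem_range_self g (-x))
  exact ⟨hfx, by rwa [mem_ker, add_apply, hfx, zero_add] at hx⟩

theorem ker_sup_ker_eq_top_of_range_le (hle : range f ≤ range (f + g))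
    (h : Disjoint (range f) (range g)) : ker f ⊔ ker g = ⊤ := by
  refine eq_top_iff.mpr fun x _ => ?_
  obtain ⟨w, hw⟩ := hle (mem_range_self f x)
  have hfg : f (x - w) = g w := by
    rw [map_sub, ← hw, add_apply]
    abel
  have hgw : g w = 0 := (disjoint_def.mp h) _ (hfg ▸ mem_range_self f _) (mem_range_self g w)
  have hxw : x - w ∈ ker f := by rw [mem_ker, hfg, hgw]
  simpa using add_mem_sup hxw (mem_ker.mpr hgw)

end LinearMap

namespace Submodule

variable {𝕜 E : Type*} [RCLike 𝕜] [NormedAddCommGroup E] [InnerProductSpace 𝕜 E]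

theorem isCompl_orthogonal_inf_inf_of_sup_eq_top {N₁ N₂ : Submodule 𝕜 E}
    [(N₁ ⊓ N₂).HasOrthogonalProjection] (h : N₁ ⊔ N₂ = ⊤) :
    IsCompl ((N₁ ⊓ N₂)ᗮ ⊓ N₁) N₂ := by
  constructor
  · rw [disjoint_iff, inf_assoc, inf_comm]
    exact inf_orthogonal_eq_bot _
  · rw [codisjoint_iff, eq_top_iff, ← h]
    calc N₁ ⊔ N₂ = (N₁ ⊓ N₂ ⊔ (N₁ ⊓ N₂)ᗮ ⊓ N₁) ⊔ N₂ := by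
          rw [sup_orthogonal_inf_of_hasOrthogonalProjection inf_le_left]
      _ ≤ (N₁ ⊓ N₂)ᗮ ⊓ N₁ ⊔ N₂ :=
          sup_le (sup_le (inf_le_right.trans le_sup_right) le_sup_left) le_sup_right

theorem orthogonal_inf_eq_sup_orthogonal [CompleteSpace E] {N₁ N₂ : Submodule 𝕜 E}
    (hN₁ : IsClosed (N₁ : Set E)) (hN₂ : IsClosed (N₂ : Set E)) (h : N₁ ⊔ N₂ = ⊤) :
    (N₁ ⊓ N₂)ᗮ = N₁ᗮ ⊔ N₂ᗮ := by
  refine le_antisymm (fun z hz => ?_) (sup_le (orthogonal_le inf_le_left)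
    (orthogonal_le inf_le_right))
  have : CompleteSpace (N₁ ⊓ N₂ : Submodule 𝕜 E) := (hN₁.inter hN₂).completeSpace_coe
  set M := (N₁ ⊓ N₂)ᗮ ⊓ N₁
  have hc : IsTopCompl M N₂ := (isCompl_orthogonal_inf_inf_of_sup_eq_top h).isTopCompl_of_isClosed
    ((isClosed_orthogonal _).inter hN₁) hN₂
  set P := M.projectionL N₂ hc
  have hP₂ : adjoint P z ∈ N₂ᗮ := fun n hn => by
    rw [adjoint_inner_right, (projectionL_apply_eq_zero_iff hc).mpr hn, inner_zero_left]
  have hP₁ : z - adjoint P z ∈ N₁ᗮ := fun u hu => by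
    have hPu : P u ∈ N₁ := (projectionL_apply_mem hc u).2
    have hu' : u - P u ∈ N₁ ⊓ N₂ :=
      ⟨sub_mem hu hPu, projectionL_eq_self_sub_projectionL hc u ▸ projectionL_apply_mem _ u⟩
    rw [inner_sub_right, adjoint_inner_right, ← inner_sub_left]
    exact (mem_orthogonal _ _).mp hz _ hu'
  simpa using add_mem_sup hP₁ hP₂

end Submodule

open ContinuousLinearMap in
theorem stmt_13 {H : Type*} [NormedAddCommGroup H] [InnerProductSpace ℂ H]
    [CompleteSpace H] (A B : H →L[ℂ] H)
    (h : LinearMap.range (B : H →ₗ[ℂ] H) = LinearMap.range (A : H →ₗ[ℂ] H) ⊔ LinearMap.range ((B - A : H →L[ℂ] H) : H →ₗ[ℂ] H))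
    (h' : LinearMap.range (A : H →ₗ[ℂ] H) ⊓ LinearMap.range ((B - A : H →L[ℂ] H) : H →ₗ[ℂ] H) = ⊥) :
    (LinearMap.range ((adjoint B : H →L[ℂ] H) : H →ₗ[ℂ] H)).topologicalClosure =
      (LinearMap.range ((adjoint A : H →L[ℂ] H) : H →ₗ[ℂ] H)).topologicalClosure ⊔
        (LinearMap.range ((adjoint B - adjoint A : H →L[ℂ] H) : H →ₗ[ℂ] H)).topologicalClosure ∧
    (LinearMap.range ((adjoint A : H →L[ℂ] H) : H →ₗ[ℂ] H)).topologicalClosure ⊓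
      (LinearMap.range ((adjoint B - adjoint A : H →L[ℂ] H) : H →ₗ[ℂ] H)).topologicalClosure = ⊥ := by
  have hsum : (A : H →ₗ[ℂ] H) + ((B - A : H →L[ℂ] H) : H →ₗ[ℂ] H) = B := by
    rw [← toLinearMap_add, add_sub_cancel]
  have hdisj := disjoint_iff.mpr h'
  have hker : LinearMap.ker (B : H →ₗ[ℂ] H) =
      LinearMap.ker (A : H →ₗ[ℂ] H) ⊓ LinearMap.ker ((B - A : H →L[ℂ] H) : H →ₗ[ℂ] H) :=
    hsum ▸ LinearMap.ker_add_of_disjoint_range hdisj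
  have htop := LinearMap.ker_sup_ker_eq_top_of_range_le (hsum ▸ h ▸ le_sup_left) hdisj
  rw [← map_sub, ← orthogonal_ker, ← orthogonal_ker, ← orthogonal_ker]
  refine ⟨?_, ?_⟩
  · rw [hker]
    exact orthogonal_inf_eq_sup_orthogonal (isClosed_ker A) (isClosed_ker (B - A)) htop
  · rw [inf_orthogonal, htop, top_orthogonal_eq_bot]
end

section
/- If A, B ∈ L(H) satisfy A ≤⁻_l B (R(B) = R(A) ∔ R(B−A)) and R(B) is closed, then R(A) and R(B−A) are closed and A ≤⁻ B (the full minus order holds). -/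
/-! Since `R(A) ∩ R(B - A) = 0`, an equation `B z = A x` forces `A z = A x`; in particular
`N(B) ⊆ N(A)`. Closedness of `R(B)` gives a bounded inner inverse `d` with `B d B = B`, and then
`A d A = A`, so `R(A)` is the range of the bounded idempotent `A d` and is closed; the same holds
for `B - A`. Moreover `A = (A d) B`, so `R(A*) ⊆ R(B*)`, which yields
`R(B*) = R(A*) + R((B - A)*)`. Finally, choosing `B z = A x` splits `x = (x - z) + z` with
`A (x - z) = 0 = (B - A) z`, so `N(A) + N(B - A)` is everything and
`R(A*) ∩ R((B - A)*) ⊆ N(A)ᗮ ∩ N(B - A)ᗮ = 0`. -/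

open ContinuousLinearMap
open scoped InnerProduct

namespace LinearMap

variable {R M N : Type*} [Ring R] [AddCommGroup M] [Module R M] [AddCommGroup N] [Module R N]
  {A B : M →ₗ[R] N}

theorem apply_eq_of_disjoint_range_sub (hAB : Disjoint (range A) (range (B - A))) {x z : M}
    (h : B z = A x) : A z = A x := by
  have hmem : A x - A z ∈ range A ⊓ range (B - A) :=
    ⟨⟨x - z, map_sub A x z⟩, ⟨z, by rw [sub_apply, h]⟩⟩
  rw [hAB.eq_bot, Submodule.mem_bot, sub_eq_zero] at hmem
  exact hmem.symm

theorem ker_le_ker_of_disjoint_range_sub (hAB : Disjoint (range A) (range (B - A))) :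
    ker B ≤ ker A := fun z hz ↦ by
  simpa using apply_eq_of_disjoint_range_sub hAB (x := 0) (by simpa using hz)

theorem ker_sup_ker_sub_eq_top (hAB : Disjoint (range A) (range (B - A)))
    (hle : range A ≤ range B) : ker A ⊔ ker (B - A) = ⊤ := by
  refine eq_top_iff.mpr fun x _ ↦ ?_
  obtain ⟨z, hz⟩ := hle ⟨x, rfl⟩
  have hAz := apply_eq_of_disjoint_range_sub hAB hz
  refine Submodule.mem_sup.mpr ⟨x - z, ?_, z, ?_, sub_add_cancel x z⟩
  · simp [hAz]
  · simp [hz, hAz]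

end LinearMap

namespace ContinuousLinearMap

section Ring

variable {R E F G : Type*} [Ring R] [TopologicalSpace E] [AddCommGroup E] [Module R E]
  [TopologicalSpace F] [AddCommGroup F] [Module R F] [TopologicalSpace G] [AddCommGroup G]
  [Module R G]

theorem comp_comp_eq_of_ker_le {A : E →L[R] G} {B : E →L[R] F} {d : F →L[R] E}
    (hd : B ∘L d ∘L B = B) (hker : B.ker ≤ A.ker) : A ∘L d ∘L B = A := by
  ext x
  have : d (B x) - x ∈ B.ker := by simpa [sub_eq_zero] using congr($hd x)
  simpa [sub_eq_zero] using hker this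

variable [IsTopologicalAddGroup F] {A B : E →L[R] F} {d : F →L[R] E}

theorem isClosed_range_of_comp_comp_eq_self [T1Space F] (hd : A ∘L d ∘L A = A) :
    IsClosed (A.range : Set F) := by
  have hidem : IsIdempotentElem (A ∘L d) := by
    ext x
    exact congr($hd (d x))
  have hrange : (A ∘L d).range = A.range := by
    refine le_antisymm (LinearMap.range_comp_le_range _ _) ?_
    rintro _ ⟨x, rfl⟩
    exact ⟨A x, congr($hd x)⟩
  exact hrange ▸ hidem.isClosed_range

theorem comp_comp_eq_self_of_disjoint_range_sub (hd : B ∘L d ∘L B = B)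
    (hAB : Disjoint A.range (B - A).range) (hle : A.range ≤ B.range) : A ∘L d ∘L A = A := by
  rw [toLinearMap_sub] at hAB
  ext x
  obtain ⟨z, hz⟩ : ∃ z, B z = A x := hle ⟨x, rfl⟩
  have hdB := comp_comp_eq_of_ker_le hd (LinearMap.ker_le_ker_of_disjoint_range_sub hAB)
  calc A (d (A x)) = A (d (B z)) := by rw [← hz]
    _ = A z := congr($hdB z)
    _ = A x := LinearMap.apply_eq_of_disjoint_range_sub hAB hz

end Ring

variable {𝕜 E F : Type*} [RCLike 𝕜] [NormedAddCommGroup E] [InnerProductSpace 𝕜 E]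
  [CompleteSpace E] [NormedAddCommGroup F] [InnerProductSpace 𝕜 F] [CompleteSpace F]

theorem exists_comp_comp_eq_self_of_isClosed_range (B : E →L[𝕜] F)
    (hB : IsClosed (B.range : Set F)) : ∃ d : F →L[𝕜] E, B ∘L d ∘L B = B := by
  have : CompleteSpace B.ker := B.isClosed_ker.completeSpace_coe
  set f := B ∘L B.kerᗮ.subtypeL
  have hf (x : E) :
      f ⟨x - B.ker.starProjection x, B.ker.sub_starProjection_mem_orthogonal x⟩ = B x := by
    have hker : B (B.ker.starProjection x) = 0 := B.ker.starProjection_apply_mem x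
    simp [f, hker]
  have hrange : f.range = B.range := by
    refine le_antisymm (LinearMap.range_comp_le_range _ _) ?_
    rintro _ ⟨x, rfl⟩
    exact ⟨_, hf x⟩
  have hinj : Function.Injective f := (injective_iff_map_eq_zero f).mpr fun y hy ↦
    Subtype.ext <| B.ker.orthogonal_disjoint.le_bot ⟨hy, y.2⟩
  have hf_closed : IsClosed (Set.range f) := by
    rwa [← range_toLinearMap, ← LinearMap.coe_range, hrange]
  have : CompleteSpace f.range := hrange ▸ hB.completeSpace_coe
  obtain ⟨g, hg⟩ : f.HasLeftInverse :=
    .of_injective_of_isClosed_range_of_closedComplement_range hinj hf_closed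
      ⟨f.range.orthogonalProjectionOnto, f.range.orthogonalProjectionOnto_mem_subspace_eq_self⟩
  refine ⟨B.kerᗮ.subtypeL ∘L g, ?_⟩
  ext x
  simp only [comp_apply, ← hf x]
  exact congr(f $(hg _))

theorem range_adjoint_le_of_disjoint_range_sub {A B : E →L[𝕜] F} {d : F →L[𝕜] E}
    (hd : B ∘L d ∘L B = B) (hAB : Disjoint A.range (B - A).range) :
    A†.range ≤ B†.range := by
  rw [toLinearMap_sub] at hAB
  have hA : (A ∘L d) ∘L B = A :=
    comp_comp_eq_of_ker_le hd (LinearMap.ker_le_ker_of_disjoint_range_sub hAB)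
  rw [← hA, adjoint_comp]
  exact LinearMap.range_comp_le_range _ _

theorem range_adjoint_inf_range_adjoint_eq_bot {A C : E →L[𝕜] F} (h : A.ker ⊔ C.ker = ⊤) :
    A†.range ⊓ C†.range = ⊥ := by
  have hle : ∀ T : E →L[𝕜] F, T†.range ≤ T.kerᗮ := fun T ↦
    T.orthogonal_ker ▸ Submodule.le_topologicalClosure _
  refine eq_bot_iff.mpr ((inf_le_inf (hle A) (hle C)).trans ?_)
  rw [Submodule.inf_orthogonal, h, Submodule.top_orthogonal_eq_bot]

end ContinuousLinearMap

open ContinuousLinearMap in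
theorem stmt_14 {H : Type*} [NormedAddCommGroup H] [InnerProductSpace ℂ H]
    [CompleteSpace H] (A B : H →L[ℂ] H)
    (h : LinearMap.range (B : H →ₗ[ℂ] H) = LinearMap.range (A : H →ₗ[ℂ] H) ⊔
      LinearMap.range ((B - A : H →L[ℂ] H) : H →ₗ[ℂ] H))
    (h' : LinearMap.range (A : H →ₗ[ℂ] H) ⊓ LinearMap.range ((B - A : H →L[ℂ] H) : H →ₗ[ℂ] H) = ⊥)
    (hB : IsClosed ((LinearMap.range (B : H →ₗ[ℂ] H) : Submodule ℂ H) : Set H)) :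
    IsClosed ((LinearMap.range (A : H →ₗ[ℂ] H) : Submodule ℂ H) : Set H) ∧
    IsClosed ((LinearMap.range ((B - A : H →L[ℂ] H) : H →ₗ[ℂ] H) : Submodule ℂ H) : Set H) ∧
    LinearMap.range (adjoint B : H →ₗ[ℂ] H) =
      LinearMap.range (adjoint A : H →ₗ[ℂ] H) ⊔
        LinearMap.range ((adjoint B - adjoint A : H →L[ℂ] H) : H →ₗ[ℂ] H) ∧
    LinearMap.range (adjoint A : H →ₗ[ℂ] H) ⊓
      LinearMap.range ((adjoint B - adjoint A : H →L[ℂ] H) : H →ₗ[ℂ] H) = ⊥ := by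
  have hA : Disjoint A.range (B - A).range := disjoint_iff.mpr h'
  have hC : Disjoint (B - A).range (B - (B - A)).range := by rwa [sub_sub_cancel, disjoint_comm]
  obtain ⟨d, hd⟩ := exists_comp_comp_eq_self_of_isClosed_range B hB
  rw [← map_sub]
  refine ⟨isClosed_range_of_comp_comp_eq_self
      (comp_comp_eq_self_of_disjoint_range_sub hd hA (h ▸ le_sup_left)),
    isClosed_range_of_comp_comp_eq_self
      (comp_comp_eq_self_of_disjoint_range_sub hd hC (h ▸ le_sup_right)), ?_, ?_⟩
  · refine le_antisymm ?_ (sup_le (range_adjoint_le_of_disjoint_range_sub hd hA)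
      (range_adjoint_le_of_disjoint_range_sub hd hC))
    calc (adjoint B).range = ((adjoint A : H →ₗ[ℂ] H) + ↑(adjoint (B - A))).range := by
          rw [← toLinearMap_add, map_sub, add_sub_cancel]
      _ ≤ _ := LinearMap.range_add_le _ _
  · refine range_adjoint_inf_range_adjoint_eq_bot ?_
    rw [toLinearMap_sub] at hA ⊢
    exact LinearMap.ker_sup_ker_sub_eq_top hA (h ▸ le_sup_left)
end

section
/- There exist bounded operators A, B on the Hilbert space ℓ²(ℕ) such that R(A+B) = R(A) ∔ R(B) (direct sum) but the closures of R(A) and R(B) have nontrivial intersection; consequently the left minus order A ≤⁻_l A+B holds while the minus order A ≤⁻ A+B fails. -/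
/-!
Take `A x = x₀ • v` with `v = (1/(n+1))ₙ`, and the weighted backward shift
`(B x)ₙ = x_{n+1}/(n+1)²`. Since `A` only sees the coordinate `x₀` and `B` only the tail, the
range of `A + B` is the sum of the two ranges. The range of `B` contains every `eₙ`, so it is
dense and its closure meets `R(A) = ℂ v`; but `B y = v` would force `y_{n+1} = n + 1`, which is
not square summable, so `R(A) ∩ R(B) = 0`.
-/

open scoped ENNReal
open Function

namespace LinearMap

variable {R M M₂ : Type*} [Ring R] [AddCommGroup M] [Module R M] [AddCommGroup M₂] [Module R M₂]

theorem range_add_eq_sup_of_comp_eq {A B : M →ₗ[R] M₂} (P : M →ₗ[R] M)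
    (hA : A ∘ₗ P = A) (hB : B ∘ₗ P = 0) : range (A + B) = range A ⊔ range B := by
  refine le_antisymm (range_add_le A B) (sup_le ?_ ?_)
  · rintro _ ⟨x, rfl⟩
    exact ⟨P x, by simpa using congr($hA x + $hB x)⟩
  · rintro _ ⟨x, rfl⟩
    have hAx := congr($hA x)
    have hBx := congr($hB x)
    simp only [comp_apply, zero_apply] at hAx hBx
    exact ⟨x - P x, by simp [hAx, hBx]⟩

end LinearMap

theorem Memℓp.comp_injective {α β : Type*} {E : α → Type*} [∀ i, NormedAddCommGroup (E i)]
    {p : ℝ≥0∞} {f : ∀ i, E i} (hf : Memℓp f p) {g : β → α} (hg : Injective g) :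
    Memℓp (fun j => f (g j)) p := by
  obtain rfl | rfl | hp := p.trichotomy
  · exact memℓp_zero (hf.finite_dsupport.preimage hg.injOn)
  · exact memℓp_infty (hf.bddAbove.mono (Set.range_comp_subset_range g fun i => ‖f i‖))
  · exact memℓp_gen ((hf.summable hp).comp_injective hg)

namespace lp

variable {α β 𝕜 : Type*} {E : α → Type*} [∀ i, NormedAddCommGroup (E i)] {p : ℝ≥0∞} [Fact (1 ≤ p)]
variable [NormedRing 𝕜] [∀ i, Module 𝕜 (E i)] [∀ i, IsBoundedSMul 𝕜 (E i)]

theorem norm_comp_injective_le (x : lp E p) {g : β → α} (hg : Injective g) :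
    ‖(⟨fun j => x (g j), (lp.memℓp x).comp_injective hg⟩ : lp (fun j => E (g j)) p)‖ ≤ ‖x‖ := by
  obtain rfl | hp := p.dichotomy
  · exact norm_le_of_forall_le (norm_nonneg x) fun j =>
      norm_apply_le_norm ENNReal.top_ne_zero x (g j)
  · refine norm_le_of_forall_sum_le (zero_lt_one.trans_le hp) (norm_nonneg x) fun s => ?_
    calc ∑ j ∈ s, ‖x (g j)‖ ^ p.toReal
        = ∑ i ∈ s.map ⟨g, hg⟩, ‖x i‖ ^ p.toReal :=
          (Finset.sum_map s ⟨g, hg⟩ fun i => ‖x i‖ ^ p.toReal).symm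
      _ ≤ ‖x‖ ^ p.toReal := sum_rpow_le_norm_rpow (zero_lt_one.trans_le hp) x _

variable (𝕜 E p) in
noncomputable def funLeft (g : β → α) (hg : Injective g) :
    lp E p →L[𝕜] lp (fun j => E (g j)) p :=
  LinearMap.mkContinuous
    { toFun x := ⟨fun j => x (g j), (lp.memℓp x).comp_injective hg⟩
      map_add' _ _ := rfl
      map_smul' _ _ := rfl }
    1 fun x => (one_mul ‖x‖).symm ▸ norm_comp_injective_le x hg

theorem funLeft_apply (g : β → α) (hg : Injective g) (x : lp E p) (j : β) :
    funLeft 𝕜 E p g hg x j = x (g j) := rfl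

theorem topologicalClosure_eq_top_of_single_mem [DecidableEq α] (hp : p ≠ ∞)
    {S : Submodule 𝕜 (lp E p)} (hS : ∀ i c, lp.single p i c ∈ S) : S.topologicalClosure = ⊤ :=
  Submodule.eq_top_iff'.2 fun x => mem_closure_of_tendsto (lp.hasSum_single hp x) <|
    Filter.Eventually.of_forall fun _ => S.sum_mem fun i _ => hS i (x i)

end lp

local notation "ℓ²" => lp (fun _ : ℕ => ℂ) 2

theorem norm_natCast_add_one (n : ℕ) : ‖(n : ℂ) + 1‖ = n + 1 := by
  exact_mod_cast Complex.norm_natCast (n + 1)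

theorem memℓp_inv_natCast_add_one : Memℓp (fun n : ℕ => ((n : ℂ) + 1)⁻¹) 2 := by
  refine memℓp_gen ((Real.summable_one_div_nat_add_rpow 1 2).2 one_lt_two |>.congr fun n => ?_)
  rw [norm_inv, norm_natCast_add_one, Real.rpow_two, ENNReal.toReal_ofNat,
    abs_of_nonneg (by positivity), one_div, ← inv_pow]
  norm_cast

noncomputable def recipSucc : ℓ² := ⟨fun n => ((n : ℂ) + 1)⁻¹, memℓp_inv_natCast_add_one⟩

theorem recipSucc_apply (n : ℕ) : recipSucc n = ((n : ℂ) + 1)⁻¹ := rfl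

theorem recipSucc_ne_zero : recipSucc ≠ 0 := fun h => by
  simpa [recipSucc_apply] using congr($h 0)

noncomputable def rankOneRecip : ℓ² →L[ℂ] ℓ² := (lp.evalCLM ℂ _ 2 0).smulRight recipSucc

theorem range_rankOneRecip :
    LinearMap.range (rankOneRecip : ℓ² →ₗ[ℂ] ℓ²) = Submodule.span ℂ {recipSucc} := by
  refine ContinuousLinearMap.range_smulRight_apply (fun h => ?_) _
  simpa [lp.evalCLM] using congr($h (lp.single 2 0 1))

theorem norm_inv_sq_natCast_add_one_smul_id_le (n : ℕ) :
    ‖(((n : ℂ) + 1) ^ 2)⁻¹ • ContinuousLinearMap.id ℂ ℂ‖ ≤ 1 := by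
  rw [norm_smul, ContinuousLinearMap.norm_id, mul_one, norm_inv, norm_pow, norm_natCast_add_one]
  exact inv_le_one_of_one_le₀ (one_le_pow₀ (by linarith [n.cast_nonneg (α := ℝ)]))

noncomputable def weightedShift : ℓ² →L[ℂ] ℓ² :=
  lp.mapCLM 2 (fun n : ℕ => (((n : ℂ) + 1) ^ 2)⁻¹ • ContinuousLinearMap.id ℂ ℂ) zero_le_one
      norm_inv_sq_natCast_add_one_smul_id_le ∘L
    lp.funLeft ℂ _ 2 Nat.succ Nat.succ_injective

theorem weightedShift_apply (x : ℓ²) (n : ℕ) :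
    weightedShift x n = x (n + 1) / ((n : ℂ) + 1) ^ 2 := by
  simp [weightedShift, lp.funLeft_apply, div_eq_inv_mul]

theorem weightedShift_single_succ (n : ℕ) (c : ℂ) :
    weightedShift (lp.single 2 (n + 1) (((n : ℂ) + 1) ^ 2 * c)) = lp.single 2 n c := by
  ext m
  rw [weightedShift_apply]
  obtain rfl | hmn := eq_or_ne m n
  · have : (m : ℂ) + 1 ≠ 0 := by exact_mod_cast m.succ_ne_zero
    rw [lp.single_apply_self, lp.single_apply_self]
    field_simp
  · rw [lp.single_apply_ne 2 _ _ (by omega), lp.single_apply_ne 2 _ _ hmn, zero_div]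

theorem topologicalClosure_range_weightedShift :
    (LinearMap.range (weightedShift : ℓ² →ₗ[ℂ] ℓ²)).topologicalClosure = ⊤ :=
  lp.topologicalClosure_eq_top_of_single_mem ENNReal.ofNat_ne_top fun n c =>
    ⟨_, weightedShift_single_succ n c⟩

theorem recipSucc_notMem_range_weightedShift :
    recipSucc ∉ LinearMap.range (weightedShift : ℓ² →ₗ[ℂ] ℓ²) := by
  rintro ⟨y, hy⟩
  have hy_succ (n : ℕ) : y (n + 1) = (n : ℂ) + 1 := by
    have h := congr($hy n)
    have : (n : ℂ) + 1 ≠ 0 := by exact_mod_cast n.succ_ne_zero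
    simp only [ContinuousLinearMap.coe_coe, weightedShift_apply, recipSucc_apply] at h
    field_simp at h
    linear_combination h
  obtain ⟨n, hn⟩ := exists_nat_gt ‖y‖
  have := lp.norm_apply_le_norm two_ne_zero y (n + 1)
  rw [hy_succ, norm_natCast_add_one] at this
  linarith

noncomputable def projZero : ℓ² →ₗ[ℂ] ℓ² := lp.lsingle 2 0 ∘ₗ lp.evalₗ _ 2 0

theorem rankOneRecip_comp_projZero :
    (rankOneRecip : ℓ² →ₗ[ℂ] ℓ²) ∘ₗ projZero = rankOneRecip := by
  ext x
  simp [rankOneRecip, projZero, lp.evalCLM]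

theorem weightedShift_comp_projZero : (weightedShift : ℓ² →ₗ[ℂ] ℓ²) ∘ₗ projZero = 0 := by
  ext x n
  simp [projZero, weightedShift_apply]

theorem stmt_15 :
    ∃ A B : (lp (fun _ : ℕ => ℂ) 2) →L[ℂ] (lp (fun _ : ℕ => ℂ) 2),
      LinearMap.range ((A + B : _) : (lp (fun _ : ℕ => ℂ) 2) →ₗ[ℂ] (lp (fun _ : ℕ => ℂ) 2)) = LinearMap.range (A : (lp (fun _ : ℕ => ℂ) 2) →ₗ[ℂ] (lp (fun _ : ℕ => ℂ) 2)) ⊔ LinearMap.range (B : (lp (fun _ : ℕ => ℂ) 2) →ₗ[ℂ] (lp (fun _ : ℕ => ℂ) 2)) ∧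
      LinearMap.range (A : (lp (fun _ : ℕ => ℂ) 2) →ₗ[ℂ] (lp (fun _ : ℕ => ℂ) 2)) ⊓ LinearMap.range (B : (lp (fun _ : ℕ => ℂ) 2) →ₗ[ℂ] (lp (fun _ : ℕ => ℂ) 2)) = ⊥ ∧
      (LinearMap.range (A : (lp (fun _ : ℕ => ℂ) 2) →ₗ[ℂ] (lp (fun _ : ℕ => ℂ) 2))).topologicalClosure ⊓
        (LinearMap.range (B : (lp (fun _ : ℕ => ℂ) 2) →ₗ[ℂ] (lp (fun _ : ℕ => ℂ) 2))).topologicalClosure ≠ ⊥ := by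
  refine ⟨rankOneRecip, weightedShift, ?_, ?_, ?_⟩
  · rw [ContinuousLinearMap.toLinearMap_add]
    exact LinearMap.range_add_eq_sup_of_comp_eq projZero rankOneRecip_comp_projZero
      weightedShift_comp_projZero
  · rw [range_rankOneRecip, ← disjoint_iff, disjoint_comm,
      Submodule.disjoint_span_singleton' recipSucc_ne_zero]
    exact recipSucc_notMem_range_weightedShift
  · rw [topologicalClosure_range_weightedShift, inf_top_eq]
    refine ne_bot_of_le_ne_bot ?_ (Submodule.le_topologicalClosure _)
    rw [range_rankOneRecip, Ne, Submodule.span_singleton_eq_bot]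
    exact recipSucc_ne_zero
end

section
/- Let A, B ∈ L(H) with A ≤⁻ (A+B), and let P be a bounded idempotent with A = P(A+B). Then E = P_A P + P_B (I−P) is a bounded idempotent whose range is the closure of R(A+B), where P_A, P_B are the orthogonal projections onto cl(R(A)) and cl(R(B)). -/
/-!
As `P` is idempotent and `A = P(A+B)`, `P` is the identity on `cl R(A)` and vanishes on `cl R(B)`;
together with `P_A² = P_A` and `P_B² = P_B` this makes `E` idempotent by a computation in the ring
of operators. Its range is therefore closed, and it contains `R(A+B)` because
`E(A+B) = P_A A + P_B B = A + B`. Conversely `R(E) ⊆ cl R(A) + cl R(B)`, and the adjoint half of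
the minus order, `A* = Q'(A+B)*`, gives `A = (A+B)Q'*` and `B = (A+B)(I - Q'*)`, so both closures
lie in `cl R(A+B)`.
-/

open ContinuousLinearMap

section Ring

variable {R : Type*} [Ring R]

theorem IsIdempotentElem.one_sub_mul_eq_zero_and_mul_eq_zero {e a b : R} (he : IsIdempotentElem e)
    (h : a = e * (a + b)) : (1 - e) * a = 0 ∧ e * b = 0 := by
  have hea : e * a = a := by rw [h, ← mul_assoc, he.eq]
  refine ⟨by rw [sub_mul, one_mul, hea, sub_self], ?_⟩
  rw [← add_sub_cancel_left a b, mul_sub, ← h, hea, sub_self]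

theorem isIdempotentElem_mul_add_mul_one_sub {p q e : R}
    (hp : IsIdempotentElem p) (hq : IsIdempotentElem q) (hep : (1 - e) * p = 0) (heq : e * q = 0) :
    IsIdempotentElem (p * e + q * (1 - e)) := by
  have hep' : e * p = p := by rwa [sub_mul, one_mul, sub_eq_zero, eq_comm] at hep
  have heq' : (1 - e) * q = q := by rw [sub_mul, one_mul, heq, sub_zero]
  calc (p * e + q * (1 - e)) * (p * e + q * (1 - e))
      = p * (e * p) * e + p * (e * q) * (1 - e) + q * ((1 - e) * p) * e
          + q * ((1 - e) * q) * (1 - e) := by noncomm_ring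
    _ = p * e + q * (1 - e) := by rw [hep, heq, hep', heq', hp.eq, hq.eq]; noncomm_ring

theorem mul_add_mul_one_sub_mul_add {p q e a b : R} (hpa : p * a = a) (hqb : q * b = b)
    (h : e * (a + b) = a) : (p * e + q * (1 - e)) * (a + b) = a + b := by
  calc (p * e + q * (1 - e)) * (a + b) = p * (e * (a + b)) + q * (a + b - e * (a + b)) := by
        noncomm_ring
    _ = a + b := by rw [h, add_sub_cancel_left, hpa, hqb]

end Ring

theorem topologicalClosure_range_le_range_of_comp_eq {R M N : Type*} [Ring R]
    [TopologicalSpace M] [AddCommGroup M] [Module R M] [IsTopologicalAddGroup M] [T1Space M]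
    [ContinuousConstSMul R M] [TopologicalSpace N] [AddCommMonoid N] [Module R N]
    {E : M →L[R] M} {T : N →L[R] M} (hE : IsIdempotentElem E) (h : E ∘L T = T) :
    (LinearMap.range (T : N →ₗ[R] M)).topologicalClosure ≤ LinearMap.range (E : M →ₗ[R] M) := by
  refine Submodule.topologicalClosure_minimal _ ?_ hE.isClosed_range
  rintro _ ⟨x, rfl⟩
  exact ⟨T x, DFunLike.congr_fun h x⟩

section InnerProductSpace

variable {𝕜 E F G : Type*} [RCLike 𝕜] [NormedAddCommGroup E] [NormedSpace 𝕜 E]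
  [NormedAddCommGroup F] [InnerProductSpace 𝕜 F] [NormedAddCommGroup G] [NormedSpace 𝕜 G]

theorem comp_starProjection_topologicalClosure_range_eq_zero [CompleteSpace F]
    {S : F →L[𝕜] G} {T : E →L[𝕜] F}
    (h : S ∘L T = 0) :
    S ∘L (LinearMap.range (T : E →ₗ[𝕜] F)).topologicalClosure.starProjection = 0 := by
  have hker :
      (LinearMap.range (T : E →ₗ[𝕜] F)).topologicalClosure ≤ LinearMap.ker (S : F →ₗ[𝕜] G) := by
    refine Submodule.topologicalClosure_minimal _ ?_ (isClosed_ker S)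
    rintro _ ⟨x, rfl⟩
    exact DFunLike.congr_fun h x
  ext x
  exact hker (Submodule.starProjection_apply_mem _ x)

theorem starProjection_topologicalClosure_range_comp [CompleteSpace F] (T : E →L[𝕜] F) :
    (LinearMap.range (T : E →ₗ[𝕜] F)).topologicalClosure.starProjection ∘L T = T := by
  ext x
  exact Submodule.starProjection_eq_self_iff.mpr
    (Submodule.le_topologicalClosure _ (LinearMap.mem_range_self _ x))

theorem range_starProjection_comp_add_starProjection_comp_le (K L : Submodule 𝕜 F)
    [K.HasOrthogonalProjection] [L.HasOrthogonalProjection] (S T : E →L[𝕜] F) :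
    LinearMap.range ((K.starProjection ∘L S + L.starProjection ∘L T : E →L[𝕜] F) : E →ₗ[𝕜] F) ≤
      K ⊔ L := by
  rw [toLinearMap_add, toLinearMap_comp, toLinearMap_comp]
  refine (LinearMap.range_add_le _ _).trans (sup_le_sup ?_ ?_) <;>
    exact (LinearMap.range_comp_le_range _ _).trans (Submodule.range_starProjection _).le

end InnerProductSpace

theorem topologicalClosure_range_sup_le_of_adjoint_eq_comp {𝕜 E F : Type*} [RCLike 𝕜]
    [NormedAddCommGroup E] [InnerProductSpace 𝕜 E] [CompleteSpace E]
    [NormedAddCommGroup F] [InnerProductSpace 𝕜 F] [CompleteSpace F]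
    {A C : E →L[𝕜] F} {Q : E →L[𝕜] E} (h : adjoint A = Q ∘L adjoint C) :
    (LinearMap.range (A : E →ₗ[𝕜] F)).topologicalClosure ⊔
        (LinearMap.range ((C - A : E →L[𝕜] F) : E →ₗ[𝕜] F)).topologicalClosure ≤
      (LinearMap.range (C : E →ₗ[𝕜] F)).topologicalClosure := by
  have hA : A = C ∘L adjoint Q := by simpa [adjoint_comp] using congrArg adjoint h
  have hCA : C - A = C ∘L (.id 𝕜 E - adjoint Q) := by rw [comp_sub, comp_id, ← hA]
  refine sup_le ?_ ?_ <;> refine Submodule.topologicalClosure_mono ?_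
  · rw [hA, toLinearMap_comp]
    exact LinearMap.range_comp_le_range _ _
  · rw [hCA, toLinearMap_comp]
    exact LinearMap.range_comp_le_range _ _

theorem stmt_16 {H : Type*} [NormedAddCommGroup H] [InnerProductSpace ℂ H]
    [CompleteSpace H] (A B P : H →L[ℂ] H)
    (hminus : ∃ P' Q' : H →L[ℂ] H, P' ∘L P' = P' ∧ Q' ∘L Q' = Q' ∧
      A = P' ∘L (A + B) ∧ adjoint A = Q' ∘L adjoint (A + B))
    (hP : P ∘L P = P) (hA : A = P ∘L (A + B)) :
    letI pA : H →L[ℂ] H :=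
      (LinearMap.range (A : H →ₗ[ℂ] H)).topologicalClosure.subtypeL ∘L
        Submodule.orthogonalProjectionOnto (LinearMap.range (A : H →ₗ[ℂ] H)).topologicalClosure
    letI pB : H →L[ℂ] H :=
      (LinearMap.range (B : H →ₗ[ℂ] H)).topologicalClosure.subtypeL ∘L
        Submodule.orthogonalProjectionOnto (LinearMap.range (B : H →ₗ[ℂ] H)).topologicalClosure
    letI E : H →L[ℂ] H := pA ∘L P + pB ∘L (1 - P)
    E ∘L E = E ∧ LinearMap.range (E : H →ₗ[ℂ] H) = (LinearMap.range ((A + B : H →L[ℂ] H) : H →ₗ[ℂ] H)).topologicalClosure := by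
  set K := (LinearMap.range (A : H →ₗ[ℂ] H)).topologicalClosure
  set L := (LinearMap.range (B : H →ₗ[ℂ] H)).topologicalClosure
  set E := K.starProjection ∘L P + L.starProjection ∘L (1 - P)
  change IsIdempotentElem E ∧ _
  obtain ⟨-, Q', -, -, -, hAadj⟩ := hminus
  obtain ⟨hPA, hPB⟩ := IsIdempotentElem.one_sub_mul_eq_zero_and_mul_eq_zero hP hA
  have hE : IsIdempotentElem E :=
    isIdempotentElem_mul_add_mul_one_sub (Submodule.isIdempotentElem_starProjection K)
      (Submodule.isIdempotentElem_starProjection L)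
      (comp_starProjection_topologicalClosure_range_eq_zero hPA)
      (comp_starProjection_topologicalClosure_range_eq_zero hPB)
  have hE_fix : E ∘L (A + B) = A + B :=
    mul_add_mul_one_sub_mul_add (starProjection_topologicalClosure_range_comp A)
      (starProjection_topologicalClosure_range_comp B) hA.symm
  refine ⟨hE, le_antisymm ?_ (topologicalClosure_range_le_range_of_comp_eq hE hE_fix)⟩
  calc LinearMap.range (E : H →ₗ[ℂ] H) ≤ K ⊔ L :=
        range_starProjection_comp_add_starProjection_comp_le K L P (1 - P)
    _ ≤ _ := by
        simpa only [add_sub_cancel_left] using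
          topologicalClosure_range_sup_le_of_adjoint_eq_comp hAadj
end

section
/- For bounded operators A, B on a complex Hilbert space, the following are equivalent: (1) A ≤⁻_l (A+B), i.e. R(A+B) = R(A) ∔ R(B); (2) for every a ∈ R(A) and b ∈ R(B) there exists x₀ ∈ H with (A+B)x₀ = a + b, and moreover every such solution x₀ of (A+B)x = a+b satisfies Ax₀ = a and Bx₀ = b. -/
namespace Submodule

variable {R M : Type*} [Ring R] [AddCommGroup M] [Module R M]

theorem eq_and_eq_of_add_eq_add_of_disjoint {p q : Submodule R M} (hpq : Disjoint p q)
    {a a' b b' : M} (ha : a ∈ p) (ha' : a' ∈ p) (hb : b ∈ q) (hb' : b' ∈ q)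
    (h : a + b = a' + b') : a = a' ∧ b = b' := by
  have hdiff : a - a' = b' - b := by
    rw [sub_eq_sub_iff_add_eq_add, h, add_comm]
  have hzero : a - a' = 0 :=
    (disjoint_def.mp hpq) _ (sub_mem ha ha') (hdiff ▸ sub_mem hb' hb)
  obtain rfl : a = a' := sub_eq_zero.mp hzero
  exact ⟨rfl, add_left_cancel h⟩

end Submodule

namespace LinearMap

variable {R M N : Type*} [Ring R] [AddCommGroup M] [Module R M] [AddCommGroup N] [Module R N]

theorem range_add_eq_sup_iff_s19 (f g : M →ₗ[R] N) :
    range (f + g) = range f ⊔ range g ↔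
      ∀ a ∈ range f, ∀ b ∈ range g, ∃ x, (f + g) x = a + b := by
  refine ⟨fun h a ha b hb ↦ ?_, fun h ↦ (range_add_le f g).antisymm ?_⟩
  · exact (h ▸ Submodule.add_mem_sup ha hb : a + b ∈ range (f + g))
  · intro y hy
    obtain ⟨a, ha, b, hb, rfl⟩ := Submodule.mem_sup.mp hy
    exact h a ha b hb

theorem inf_range_eq_bot_iff (f g : M →ₗ[R] N) :
    range f ⊓ range g = ⊥ ↔
      ∀ a ∈ range f, ∀ b ∈ range g, ∀ x, (f + g) x = a + b → f x = a ∧ g x = b := by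
  rw [← disjoint_iff]
  refine ⟨fun h a ha b hb x hx ↦ ?_, fun h ↦ ?_⟩
  · exact Submodule.eq_and_eq_of_add_eq_add_of_disjoint h (mem_range_self f x) ha
      (mem_range_self g x) hb hx
  · refine Submodule.disjoint_def.mpr fun y hyf hyg ↦ ?_
    -- `x = 0` solves `(f + g) x = y + (-y)`, so uniqueness forces `f 0 = y`.
    have hf0 : f 0 = y := (h y hyf (-y) (neg_mem hyg) 0 (by simp)).1
    simpa using hf0.symm

end LinearMap

theorem stmt_19_general {H : Type*} [NormedAddCommGroup H] [InnerProductSpace ℂ H]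
    (A B : H →L[ℂ] H) :
    (LinearMap.range ((A + B : H →L[ℂ] H) : H →ₗ[ℂ] H) = LinearMap.range (A : H →ₗ[ℂ] H) ⊔ LinearMap.range (B : H →ₗ[ℂ] H) ∧
        LinearMap.range (A : H →ₗ[ℂ] H) ⊓ LinearMap.range (B : H →ₗ[ℂ] H) = ⊥) ↔
      (∀ a ∈ LinearMap.range (A : H →ₗ[ℂ] H), ∀ b ∈ LinearMap.range (B : H →ₗ[ℂ] H),
        (∃ x₀ : H, (A + B) x₀ = a + b) ∧
        ∀ x₀ : H, (A + B) x₀ = a + b → A x₀ = a ∧ B x₀ = b) := by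
  rw [ContinuousLinearMap.toLinearMap_add, LinearMap.range_add_eq_sup_iff_s19, LinearMap.inf_range_eq_bot_iff]
  simp only [← forall_and]
  rfl

theorem stmt_19 {H : Type*} [NormedAddCommGroup H] [InnerProductSpace ℂ H]
    [CompleteSpace H] (A B : H →L[ℂ] H) :
    (LinearMap.range ((A + B : H →L[ℂ] H) : H →ₗ[ℂ] H) = LinearMap.range (A : H →ₗ[ℂ] H) ⊔ LinearMap.range (B : H →ₗ[ℂ] H) ∧
        LinearMap.range (A : H →ₗ[ℂ] H) ⊓ LinearMap.range (B : H →ₗ[ℂ] H) = ⊥) ↔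
      (∀ a ∈ LinearMap.range (A : H →ₗ[ℂ] H), ∀ b ∈ LinearMap.range (B : H →ₗ[ℂ] H),
        (∃ x₀ : H, (A + B) x₀ = a + b) ∧
        ∀ x₀ : H, (A + B) x₀ = a + b → A x₀ = a ∧ B x₀ = b) :=
  stmt_19_general A B
end
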